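/- Let r ≥ 1 be an integer and 0 < δ < 1 be real. Let G be a graph on n vertices with at least n^{2-(1-δ)/⌈(r-δ)/(1-δ)⌉} edges. Then G contains a subset U of at least n^δ vertices such that every r vertices in U have at least n^δ common neighbors. -/

import Mathlib

/-!
Dependent random choice with t = ⌈(r - δ)/(1 - δ)⌉ and a = m = n^δ. For a t-tuple w of vertices
let A(w) be its common neighbourhood, and call an r-set bad if it has fewer than m common
neighbours. Double counting gives Σ_w |A(w)| = Σ_v deg(v)^t, and, since S ⊆ A(w) exactly when w
takes values in N(S), Σ_w #{bad S ⊆ A(w)} = Σ_{bad S} |N(S)|^t ≤ C(n, r) m^t. So some w has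
|A(w)| - #{bad S ⊆ A(w)} ≥ a as soon as Σ_v deg(v)^t ≥ C(n, r) m^t + a n^t, and deleting one
vertex of each bad r-set inside A(w) leaves U. By the power mean inequality the edge bound gives
Σ_v deg(v)^t ≥ 2^t n^(t+δ), and the choice of t makes n^r m^t ≤ n^(t+δ).
-/

open Finset

theorem Finset.sum_card_filter_image_subset {α β : Type*} [Fintype α] [DecidableEq α]
    (t : ℕ) (s : Finset β) (N : β → Finset α) :
    ∑ w : Fin t → α, #{b ∈ s | univ.image w ⊆ N b} = ∑ b ∈ s, #(N b) ^ t := by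
  simp_rw [card_filter]
  rw [sum_comm]
  refine sum_congr rfl fun b _ => ?_
  rw [← card_filter]
  convert Fintype.card_piFinset_const (N b) t using 2
  ext w
  simp [image_subset_iff]

theorem Finset.exists_subset_card_le_add_forall_not_subset {α : Type*} [DecidableEq α]
    (A : Finset α) (B : Finset (Finset α)) (hB : ∀ S ∈ B, S.Nonempty) :
    ∃ U ⊆ A, #A ≤ #U + #B ∧ ∀ S ∈ B, ¬S ⊆ U := by
  choose pick hpick using hB
  set P := B.attach.image fun S => pick S.1 S.2
  refine ⟨A \ P, sdiff_subset, ?_, fun S hS hSU => ?_⟩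
  · calc #A ≤ #(A \ P) + #P := card_le_card_sdiff_add_card
      _ ≤ #(A \ P) + #B := by grw [card_image_le, card_attach]
  · have := hSU (hpick S hS)
    simp only [P, mem_sdiff, mem_image] at this
    exact this.2 ⟨⟨S, hS⟩, mem_attach _ _, rfl⟩

namespace SimpleGraph

variable {V : Type*} [Fintype V]

def commonNeighborFinset (G : SimpleGraph V) [DecidableRel G.Adj] (S : Finset V) : Finset V :=
  {v | ∀ u ∈ S, G.Adj u v}

variable {G : SimpleGraph V} [DecidableRel G.Adj]

@[simp]
theorem mem_commonNeighborFinset {S : Finset V} {v : V} :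
    v ∈ G.commonNeighborFinset S ↔ ∀ u ∈ S, G.Adj u v := by
  simp [commonNeighborFinset]

@[simp]
theorem coe_commonNeighborFinset (S : Finset V) :
    (G.commonNeighborFinset S : Set V) = {v | ∀ u ∈ S, G.Adj u v} := by
  ext; simp

theorem subset_commonNeighborFinset_comm {S T : Finset V} :
    S ⊆ G.commonNeighborFinset T ↔ T ⊆ G.commonNeighborFinset S := by
  simp only [subset_iff, mem_commonNeighborFinset]
  exact ⟨fun h u hu v hv => (h hv u hu).symm, fun h u hu v hv => (h hv u hu).symm⟩

theorem commonNeighborFinset_singleton (v : V) :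
    G.commonNeighborFinset {v} = G.neighborFinset v := by
  ext; simp

theorem two_mul_card_edgeFinset_pow_div_le_sum_degree_pow (t : ℕ) :
    (2 * #G.edgeFinset : ℝ) ^ (t + 1) / Fintype.card V ^ t ≤ ∑ v, (G.degree v : ℝ) ^ (t + 1) := by
  have hsum : ∑ v, (G.degree v : ℝ) = 2 * #G.edgeFinset := by
    exact_mod_cast G.sum_degrees_eq_twice_card_edges
  rw [← hsum, ← card_univ]
  exact pow_sum_div_card_le_sum_pow (fun _ _ => by positivity) t

theorem two_pow_mul_rpow_le_sum_degree_pow [Nonempty V] (t : ℕ) {δ : ℝ}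
    (hE : (Fintype.card V : ℝ) ^ (2 - (1 - δ) / (t + 1)) ≤ #G.edgeFinset) :
    2 ^ (t + 1) * (Fintype.card V : ℝ) ^ (t + 1 + δ) ≤ ∑ v, (G.degree v : ℝ) ^ (t + 1) := by
  set n : ℝ := (Fintype.card V : ℝ)
  have hn : 0 < n := Nat.cast_pos.2 Fintype.card_pos
  calc 2 ^ (t + 1) * n ^ (t + 1 + δ) = (2 * n ^ (2 - (1 - δ) / (t + 1))) ^ (t + 1) / n ^ t := by
        rw [eq_div_iff (by positivity), mul_pow, ← Real.rpow_mul_natCast hn.le, mul_assoc,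
          ← Real.rpow_natCast n t, ← Real.rpow_add hn]
        congr 2
        push_cast
        field_simp
        ring
    _ ≤ (2 * #G.edgeFinset) ^ (t + 1) / n ^ t := by gcongr
    _ ≤ ∑ v, (G.degree v : ℝ) ^ (t + 1) := two_mul_card_edgeFinset_pow_div_le_sum_degree_pow t

variable [DecidableEq V]

theorem sum_card_commonNeighborFinset_image (t : ℕ) :
    ∑ w : Fin t → V, #(G.commonNeighborFinset (univ.image w)) = ∑ v, G.degree v ^ t := by
  have key (w : Fin t → V) : G.commonNeighborFinset (univ.image w) =
      ({v | univ.image w ⊆ G.commonNeighborFinset {v}} : Finset V) := by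
    ext v
    rw [mem_filter, ← subset_commonNeighborFinset_comm, singleton_subset_iff]
    simp
  simp_rw [key, sum_card_filter_image_subset, commonNeighborFinset_singleton,
    card_neighborFinset_eq_degree]

theorem sum_card_filter_subset_commonNeighborFinset_image (t : ℕ) (B : Finset (Finset V)) :
    ∑ w : Fin t → V, #{S ∈ B | S ⊆ G.commonNeighborFinset (univ.image w)} =
      ∑ S ∈ B, #(G.commonNeighborFinset S) ^ t := by
  simp_rw [subset_commonNeighborFinset_comm, sum_card_filter_image_subset]

theorem exists_finset_le_card_commonNeighborFinset [Nonempty V] {r t : ℕ} (hr : r ≠ 0)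
    {a m : ℝ} (hm : 0 ≤ m) (h : (Fintype.card V).choose r * m ^ t + a * Fintype.card V ^ t ≤
      ∑ v, (G.degree v : ℝ) ^ t) :
    ∃ U : Finset V, a ≤ #U ∧ ∀ S ⊆ U, #S = r → m ≤ #(G.commonNeighborFinset S) := by
  set bad : Finset (Finset V) := {S ∈ univ.powersetCard r | #(G.commonNeighborFinset S) < m}
  set A : (Fin t → V) → Finset V := fun w => G.commonNeighborFinset (univ.image w)
  set B : (Fin t → V) → Finset (Finset V) := fun w => {S ∈ bad | S ⊆ A w}
  have hbad : ∑ S ∈ bad, (#(G.commonNeighborFinset S) : ℝ) ^ t ≤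
      (Fintype.card V).choose r * m ^ t := by
    calc _ ≤ ∑ S ∈ bad, m ^ t :=
          sum_le_sum fun S hS => pow_le_pow_left₀ (by positivity) (mem_filter.1 hS).2.le t
      _ ≤ (Fintype.card V).choose r * m ^ t := by
          rw [sum_const, nsmul_eq_mul]
          gcongr ?_ * _
          exact_mod_cast calc #bad ≤ #(univ.powersetCard r) := card_filter_le _ _
            _ = (Fintype.card V).choose r := by rw [card_powersetCard, card_univ]
  have hsum : ∑ _w : Fin t → V, a ≤ ∑ w, ((#(A w) : ℝ) - #(B w)) := by
    have hA : ∑ w, (#(A w) : ℝ) = ∑ v, (G.degree v : ℝ) ^ t := by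
      exact_mod_cast sum_card_commonNeighborFinset_image t
    have hB : ∑ w, (#(B w) : ℝ) = ∑ S ∈ bad, (#(G.commonNeighborFinset S) : ℝ) ^ t := by
      exact_mod_cast sum_card_filter_subset_commonNeighborFinset_image t bad
    rw [sum_sub_distrib, hA, hB, sum_const, card_univ, Fintype.card_fun, Fintype.card_fin,
      nsmul_eq_mul, Nat.cast_pow]
    linarith
  obtain ⟨w, -, hw⟩ := exists_le_of_sum_le univ_nonempty hsum
  obtain ⟨U, hUA, hcard, hU⟩ :=
    exists_subset_card_le_add_forall_not_subset (A w) (B w) fun S hS => by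
      simp only [B, bad, mem_filter, mem_powersetCard] at hS
      rw [← card_pos, hS.1.1.2]
      exact Nat.pos_of_ne_zero hr
  refine ⟨U, ?_, fun S hSU hSr => ?_⟩
  · have : (#(A w) : ℝ) ≤ #U + #(B w) := by exact_mod_cast hcard
    linarith
  · by_contra! hlt
    exact hU S (by simp [B, bad, hSr, hlt, hSU.trans hUA]) hSU

end SimpleGraph

theorem Nat.choose_mul_rpow_pow_add_le_two_pow_mul_rpow {n r t : ℕ} {δ : ℝ} (hn : 1 ≤ n)
    (h : r + δ * (t + 1) ≤ t + 1 + δ) :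
    (n.choose r : ℝ) * ((n : ℝ) ^ δ) ^ (t + 1) + n ^ δ * n ^ (t + 1) ≤
      2 ^ (t + 1) * (n : ℝ) ^ (t + 1 + δ) := by
  have hn : (1 : ℝ) ≤ n := Nat.one_le_cast.2 hn
  have hchoose : (n.choose r : ℝ) * (n ^ δ) ^ (t + 1) ≤ n ^ (t + 1 + δ) := calc
    _ ≤ (n : ℝ) ^ (r : ℝ) * n ^ (δ * (t + 1 : ℕ)) := by
        rw [Real.rpow_natCast, Real.rpow_mul_natCast (by positivity)]
        gcongr
        exact_mod_cast n.choose_le_pow r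
    _ ≤ n ^ (t + 1 + δ) := by
        rw [← Real.rpow_add (by positivity)]
        exact Real.rpow_le_rpow_of_exponent_le hn (by push_cast; linarith)
  have hsplit : (n : ℝ) ^ (t + 1 + δ) = n ^ δ * n ^ (t + 1) := by
    rw [Real.rpow_add (by positivity), ← Nat.cast_succ, Real.rpow_natCast, mul_comm]
  have htwo : (2 : ℝ) ≤ 2 ^ (t + 1) := le_self_pow₀ one_le_two (by omega)
  nlinarith [Real.rpow_nonneg (by positivity : (0 : ℝ) ≤ n) (t + 1 + δ)]

theorem stmt_6_general (r : ℕ) (hr : 1 ≤ r) (δ : ℝ) (hδ1 : δ < 1) :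
    ∃ n0 : ℕ, ∀ n ≥ n0, ∀ G : SimpleGraph (Fin n),
      (n : ℝ) ^ (2 - (1 - δ) / (⌈((r : ℝ) - δ) / (1 - δ)⌉ : ℝ)) ≤ G.edgeSet.ncard →
      ∃ U : Finset (Fin n), (n : ℝ) ^ δ ≤ U.card ∧
        ∀ S ⊆ U, S.card = r →
          (n : ℝ) ^ δ ≤ ({v : Fin n | ∀ u ∈ S, G.Adj u v}.ncard : ℝ) := by
  classical
  have hr' : (1 : ℝ) ≤ r := Nat.one_le_cast.2 hr
  have hceil := Int.le_ceil (((r : ℝ) - δ) / (1 - δ))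
  obtain ⟨t, ht⟩ : ∃ t : ℕ, ⌈((r : ℝ) - δ) / (1 - δ)⌉ = t + 1 :=
    Int.eq_succ_of_zero_lt (Int.ceil_pos.2 (div_pos (by linarith) (by linarith)))
  rw [ht, div_le_iff₀ (by linarith)] at hceil
  push_cast at hceil
  refine ⟨1, fun n hn G hE => ?_⟩
  have : Nonempty (Fin n) := ⟨⟨0, hn⟩⟩
  rw [ht, ← G.coe_edgeFinset, Set.ncard_coe_finset] at hE
  push_cast at hE
  have hdeg := G.two_pow_mul_rpow_le_sum_degree_pow t (by simpa using hE)
  have hnum := Nat.choose_mul_rpow_pow_add_le_two_pow_mul_rpow (r := r) (t := t) (δ := δ) hn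
    (by linarith)
  rw [Fintype.card_fin] at hdeg
  obtain ⟨U, hU, hcommon⟩ := G.exists_finset_le_card_commonNeighborFinset (r := r) (t := t + 1)
    (a := n ^ δ) (m := n ^ δ) (by omega) (by positivity) (by rw [Fintype.card_fin]; linarith)
  refine ⟨U, hU, fun S hSU hSr => ?_⟩
  rw [← SimpleGraph.coe_commonNeighborFinset, Set.ncard_coe_finset]
  exact hcommon S hSU hSr

theorem stmt_6 (r : ℕ) (hr : 1 ≤ r) (δ : ℝ) (hδ0 : 0 < δ) (hδ1 : δ < 1) :
    ∃ n0 : ℕ, ∀ n ≥ n0, ∀ G : SimpleGraph (Fin n),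
      (n : ℝ) ^ (2 - (1 - δ) / (⌈((r : ℝ) - δ) / (1 - δ)⌉ : ℝ)) ≤ G.edgeSet.ncard →
      ∃ U : Finset (Fin n), (n : ℝ) ^ δ ≤ U.card ∧
        ∀ S ⊆ U, S.card = r →
          (n : ℝ) ^ δ ≤ ({v : Fin n | ∀ u ∈ S, G.Adj u v}.ncard : ℝ) :=
  stmt_6_general r hr δ hδ1
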